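/- Let $\alpha > 0$, $M \ge 2$, $R \ge 1$ and let $\w_r(R,M)$ be the Richardson–Romberg weights for refiners $n_r = M^{r-1}$ and $\widetilde{\w}_{R+1} = (-1)^{R-1} M^{-\alpha R(R-1)/2}$. Then $\frac{1}{|\widetilde{\w}_{R+1}|}\sum_{r=1}^R \frac{|\w_r(R,M)|}{n_r^{\alpha R}} \le \frac{1}{\pi_{\alpha,M}^2}\sum_{k \ge 0} M^{-\frac{\alpha}{2}k(k+1)}$, with the bound uniform in $R$. -/

import Mathlib

open Finset

/-- Richardson–Romberg weight `w_{r+1}(R,M)` for geometric refiners `n_r = M^{r-1}`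
(Lean index `r` corresponds to paper index `r+1`). -/
noncomputable def rrWeight (α : ℝ) (M R r : ℕ) : ℝ :=
  (-1 : ℝ) ^ (R - 1 - r) *
      (M : ℝ) ^ (-(α / 2) * (((R - 1 - r) * (R - r) : ℕ) : ℝ)) /
    ((∏ j ∈ range r, (1 - (M : ℝ) ^ (-((j + 1 : ℕ) : ℝ) * α))) *
      ∏ j ∈ range (R - 1 - r), (1 - (M : ℝ) ^ (-((j + 1 : ℕ) : ℝ) * α)))

/-- The infinite product `π_{α,M} = ∏_{k ≥ 1} (1 - M^{-αk})`. -/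
noncomputable def piAlphaM (α : ℝ) (M : ℕ) : ℝ :=
  ∏' k : ℕ, (1 - (M : ℝ) ^ (-(α * ((k + 1 : ℕ) : ℝ))))

/-!
Write `q = M^{-α}`. The identity `(R-r)(R-r+1) + 2(r-1)R = R(R-1) + r(r-1)` turns the
`r`-th normalized term into `M^{-α r(r-1)/2} / (∏_{j=1}^{r-1} (1 - q^j) ∏_{j=1}^{R-r} (1 - q^j))`,
and a finite product of factors `1 - q^j ∈ (0, 1]` is at least the convergent infinite one
`π_{α,M} > 0`.
-/

namespace Real

theorem tprod_pos_of_summable_log {ι : Type*} {f : ι → ℝ} (hpos : ∀ i, 0 < f i)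
    (hf : Summable fun i => log (f i)) : 0 < ∏' i, f i :=
  rexp_tsum_eq_tprod hpos hf ▸ exp_pos _

theorem tprod_le_prod_range_of_le_one {f : ℕ → ℝ} (hpos : ∀ k, 0 < f k) (hle : ∀ k, f k ≤ 1)
    (hf : Summable fun k => log (f k)) (m : ℕ) : ∏' k, f k ≤ ∏ k ∈ range m, f k := by
  have htail : ∑' k, log (f (k + m)) ≤ 0 :=
    tsum_nonpos fun k => log_nonpos (hpos _).le (hle _)
  calc ∏' k, f k = exp (∑ k ∈ range m, log (f k) + ∑' k, log (f (k + m))) := by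
        rw [hf.sum_add_tsum_nat_add, rexp_tsum_eq_tprod hpos hf]
    _ ≤ exp (∑ k ∈ range m, log (f k)) := exp_le_exp.2 (by linarith)
    _ = ∏ k ∈ range m, f k := by
        rw [exp_sum]; exact prod_congr rfl fun k _ => exp_log (hpos k)

end Real

section OneSubPow

variable {q : ℝ} (hq0 : 0 ≤ q) (hq1 : q < 1)
include hq0 hq1

theorem one_sub_pow_succ_pos (k : ℕ) : 0 < 1 - q ^ (k + 1) :=
  sub_pos.2 (pow_lt_one₀ hq0 hq1 k.succ_ne_zero)

theorem summable_log_one_sub_pow_succ : Summable fun k : ℕ => Real.log (1 - q ^ (k + 1)) := by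
  have hgeom : Summable fun k : ℕ => -q ^ (k + 1) := by
    simpa only [pow_succ] using ((summable_geometric_of_lt_one hq0 hq1).mul_right q).neg
  simpa only [sub_eq_add_neg] using Real.summable_log_one_add_of_summable hgeom

theorem tprod_one_sub_pow_succ_pos : 0 < ∏' k : ℕ, (1 - q ^ (k + 1)) :=
  Real.tprod_pos_of_summable_log (one_sub_pow_succ_pos hq0 hq1)
    (summable_log_one_sub_pow_succ hq0 hq1)

theorem sq_tprod_one_sub_pow_succ_le (a b : ℕ) :
    (∏' k : ℕ, (1 - q ^ (k + 1))) ^ 2 ≤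
      (∏ k ∈ range a, (1 - q ^ (k + 1))) * ∏ k ∈ range b, (1 - q ^ (k + 1)) := by
  have hle (m : ℕ) := Real.tprod_le_prod_range_of_le_one (one_sub_pow_succ_pos hq0 hq1)
    (fun k => sub_le_self _ (pow_nonneg hq0 _)) (summable_log_one_sub_pow_succ hq0 hq1) m
  rw [sq]
  exact mul_le_mul (hle a) (hle b) (tprod_one_sub_pow_succ_pos hq0 hq1).le
    (prod_nonneg fun k _ => (one_sub_pow_succ_pos hq0 hq1 k).le)

end OneSubPow

theorem piAlphaM_eq_tprod (α : ℝ) (M : ℕ) :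
    piAlphaM α M = ∏' k : ℕ, (1 - ((M : ℝ) ^ (-α)) ^ (k + 1)) := by
  simp only [piAlphaM, ← neg_mul, Real.rpow_mul_natCast (Nat.cast_nonneg M)]

theorem abs_rrWeight (α : ℝ) (M R r : ℕ) :
    |rrWeight α M R r| =
      (M : ℝ) ^ (-(α / 2) * (((R - 1 - r) * (R - r) : ℕ) : ℝ)) /
        |(∏ j ∈ range r, (1 - ((M : ℝ) ^ (-α)) ^ (j + 1))) *
          ∏ j ∈ range (R - 1 - r), (1 - ((M : ℝ) ^ (-α)) ^ (j + 1))| := by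
  have hfactor (j : ℕ) : (M : ℝ) ^ (-((j + 1 : ℕ) : ℝ) * α) = ((M : ℝ) ^ (-α)) ^ (j + 1) := by
    rw [neg_mul_comm, mul_comm, Real.rpow_mul_natCast (Nat.cast_nonneg M)]
  rw [rrWeight, abs_div, abs_mul, abs_neg_one_pow, one_mul,
    abs_of_nonneg (Real.rpow_nonneg (Nat.cast_nonneg M) _)]
  simp only [hfactor]

theorem rpow_rrWeight_exponent {x : ℝ} (hx : 0 < x) (α : ℝ) {r R : ℕ} (hr : r < R) :
    x ^ (-(α / 2) * (((R - 1 - r) * (R - r) : ℕ) : ℝ)) / (x ^ r) ^ (α * R) =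
      x ^ (-(α * ((R * (R - 1) : ℕ) : ℝ) / 2)) * x ^ (-(α * ((r * (r + 1) : ℕ) : ℝ) / 2)) := by
  obtain ⟨s, rfl⟩ : ∃ s, R = r + s + 1 := ⟨R - r - 1, by omega⟩
  rw [← Real.rpow_natCast, ← Real.rpow_mul hx.le, ← Real.rpow_sub hx, ← Real.rpow_add hx]
  congr 1
  simp only [Nat.add_sub_cancel, show r + s + 1 - r = s + 1 by omega,
    show r + s - r = s by omega]
  push_cast
  ring

theorem summable_rpow_neg_triangular {x : ℝ} (hx : 1 < x) {α : ℝ} (hα : 0 < α) :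
    Summable fun k : ℕ => x ^ (-(α * ((k * (k + 1) : ℕ) : ℝ) / 2)) := by
  have hq1 : x ^ (-α) < 1 := Real.rpow_lt_one_of_one_lt_of_neg hx (neg_neg_of_pos hα)
  refine Summable.of_nonneg_of_le (fun k => Real.rpow_nonneg (by linarith) _) (fun k => ?_)
    (summable_geometric_of_lt_one (Real.rpow_nonneg (by linarith) _) hq1)
  rw [← Real.rpow_mul_natCast (by linarith)]
  refine Real.rpow_le_rpow_of_exponent_le hx.le ?_
  have hk : (2 * k : ℝ) ≤ ((k * (k + 1) : ℕ) : ℝ) := by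
    have := Nat.le_mul_self k
    exact_mod_cast (by rw [Nat.mul_succ]; omega : 2 * k ≤ k * (k + 1))
  nlinarith [mul_le_mul_of_nonneg_left hk hα.le]

theorem rrWeight_normalized_sum_bound_general (α : ℝ) (hα : 0 < α) (M R : ℕ)
    (hM : 2 ≤ M) :
    (1 / |(-1 : ℝ) ^ (R - 1) * (M : ℝ) ^ (-(α * ((R * (R - 1) : ℕ) : ℝ) / 2))|) *
        ∑ r ∈ range R, |rrWeight α M R r| / ((M : ℝ) ^ (r : ℕ)) ^ (α * R) ≤
      1 / (piAlphaM α M) ^ 2 *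
        ∑' k : ℕ, (M : ℝ) ^ (-(α * ((k * (k + 1) : ℕ) : ℝ) / 2)) := by
  have hM1 : (1 : ℝ) < M := by exact_mod_cast hM
  have hM0 : (0 : ℝ) < M := by linarith
  set q := (M : ℝ) ^ (-α)
  have hq0 : 0 ≤ q := Real.rpow_nonneg hM0.le _
  have hq1 : q < 1 := Real.rpow_lt_one_of_one_lt_of_neg hM1 (neg_neg_of_pos hα)
  set P : ℕ → ℝ := fun m => ∏ j ∈ range m, (1 - q ^ (j + 1))
  set G : ℕ → ℝ := fun k => (M : ℝ) ^ (-(α * ((k * (k + 1) : ℕ) : ℝ) / 2))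
  have hG (k : ℕ) : 0 ≤ G k := Real.rpow_nonneg hM0.le _
  have hP (m : ℕ) : 0 < P m := prod_pos fun j _ => one_sub_pow_succ_pos hq0 hq1 j
  have hπ : 0 < piAlphaM α M := piAlphaM_eq_tprod α M ▸ tprod_one_sub_pow_succ_pos hq0 hq1
  have hw : 0 < (M : ℝ) ^ (-(α * ((R * (R - 1) : ℕ) : ℝ) / 2)) := Real.rpow_pos_of_pos hM0 _
  calc _ = ∑ r ∈ range R, G r / (P r * P (R - 1 - r)) := by
        rw [abs_mul, abs_neg_one_pow, one_mul, abs_of_pos hw, mul_sum]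
        refine sum_congr rfl fun r hr => ?_
        rw [abs_rrWeight, div_right_comm, rpow_rrWeight_exponent hM0 α (mem_range.1 hr),
          abs_of_pos (mul_pos (hP r) (hP _))]
        field_simp
        rfl
    _ ≤ ∑ r ∈ range R, G r / piAlphaM α M ^ 2 := by
        gcongr with r
        rw [piAlphaM_eq_tprod]
        exact sq_tprod_one_sub_pow_succ_le hq0 hq1 _ _
    _ = 1 / piAlphaM α M ^ 2 * ∑ r ∈ range R, G r := by rw [← sum_div, one_div_mul_eq_div]
    _ ≤ _ := by
        gcongr
        exact (summable_rpow_neg_triangular hM1 hα).sum_le_tsum _ fun k _ => hG k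

theorem rrWeight_normalized_sum_bound (α : ℝ) (hα : 0 < α) (M R : ℕ)
    (hM : 2 ≤ M) (hR : 1 ≤ R) :
    (1 / |(-1 : ℝ) ^ (R - 1) * (M : ℝ) ^ (-(α * ((R * (R - 1) : ℕ) : ℝ) / 2))|) *
        ∑ r ∈ range R, |rrWeight α M R r| / ((M : ℝ) ^ (r : ℕ)) ^ (α * R) ≤
      1 / (piAlphaM α M) ^ 2 *
        ∑' k : ℕ, (M : ℝ) ^ (-(α * ((k * (k + 1) : ℕ) : ℝ) / 2)) :=
  rrWeight_normalized_sum_bound_general α hα M R hM
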